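/- Let Γ be a finite connected oriented graph. A proper subgraph Λ of Γ is maximal among proper A-complete subgraphs if and only if either (i) Λ is connected and is obtained from Γ by deleting one vertex together with all edges incident to it, or (ii) Λ has exactly two connected components and is obtained from Γ by deleting a simple disconnecting set, i.e., a set of edges each of which joins the two components; equivalently, in case (ii) the vertex set of Γ is partitioned into two nonempty parts V₁, V₂ whose induced subgraphs are connected and Λ is obtained by deleting all edges between V₁ and V₂. -/

import Mathlib

/-- The underlying simple graph of the subgraph of an oriented graph given by the
set of edges `A` (adjacency through edges in `A`). -/
def graphSub {Vt E : Type*} (ini fin : E → Vt) (A : Set E) : SimpleGraph Vt where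
  Adj v w := v ≠ w ∧ ∃ a ∈ A, s(ini a, fin a) = s(v, w)
  symm := ⟨by
    rintro v w ⟨h, a, ha, ha'⟩
    exact ⟨h.symm, a, ha, ha'.trans (Sym2.eq_swap)⟩⟩
  loopless := ⟨fun v h => h.1 rfl⟩

/-- The vector `x_a = e_{f(a)} - e_{i(a)}` associated to an edge `a`. -/
def edgeVec {Vt E : Type*} [DecidableEq Vt] (ini fin : E → Vt) (a : E) : Vt → ℝ :=
  Pi.single (fin a) 1 - Pi.single (ini a) 1

/-- The vertex set of the subgraph with edge set `A`: all endpoints of edges of `A`. -/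
def vertexSet {Vt E : Type*} (ini fin : E → Vt) (A : Set E) : Set Vt :=
  {v | ∃ a ∈ A, v = ini a ∨ v = fin a}

/-- The subgraph with edge set `A` is connected: any two of its vertices are
joined by a path through edges of `A`. -/
def EdgeConnected {Vt E : Type*} (ini fin : E → Vt) (A : Set E) : Prop :=
  ∀ a ∈ A, ∀ b ∈ A, (graphSub ini fin A).Reachable (ini a) (ini b)

/-- The subgraph with edge set `A` is A-complete:
`span {x_a : a ∈ A} ∩ Δ_Γ = {x_a : a ∈ A}`. -/
def IsAComplete {Vt E : Type*} [DecidableEq Vt] (ini fin : E → Vt) (A : Set E) : Prop :=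
  (Submodule.span ℝ (edgeVec ini fin '' A) : Set (Vt → ℝ)) ∩
      Set.range (edgeVec ini fin) = edgeVec ini fin '' A

/-- The underlying simple graph of the whole oriented graph. -/
def graphOf {Vt E : Type*} (ini fin : E → Vt) : SimpleGraph Vt :=
  graphSub ini fin Set.univ

/-!
A-completeness of `A` says that an edge lies in `A` as soon as its endpoints are joined by a
path of `Γ_A`: a path gives `x_b` as a signed sum of the `x_a`, and conversely the functional
summing coordinates over a connected component of `Γ_A` kills every `x_a` with `a ∈ A` but not
`x_b` if `b` leaves that component. So the A-complete sets are the flats of the graphic matroid.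
For each vertex set `W`, the edges not cut by `W` form such a flat. If `A` is a maximal proper
flat and `b ∉ A`, the components `C₁ ∋ i(b)` and `C₂ ∋ f(b)` of `Γ_A` must cover all vertices,
since otherwise (`Γ` being connected) the edges not cut by `C₁ ∪ C₂` form a proper flat
containing `A` and `b`; hence `A` is the set of edges not cut by `C₁`, and both sides are
connected. Conversely, if both sides of `W` are connected, any flat containing the uncut edges
and one cut edge connects everything. Case (i) is the case `Wᶜ = {v₀}`.
-/

section GraphicFlats

open SimpleGraph Set

variable {Vt E : Type*} (ini fin : E → Vt)

def nonCutEdges (W : Set Vt) : Set E :=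
  {a | ini a ∈ W ↔ fin a ∈ W}

def IsGraphicFlat (A : Set E) : Prop :=
  ∀ b, (graphSub ini fin A).Reachable (ini b) (fin b) → b ∈ A

variable {ini fin}

lemma graphSub_mono {A B : Set E} (h : A ⊆ B) : graphSub ini fin A ≤ graphSub ini fin B :=
  fun _ _ ⟨hne, a, ha, hs⟩ => ⟨hne, a, h ha, hs⟩

lemma nonCutEdges_compl (W : Set Vt) : nonCutEdges ini fin Wᶜ = nonCutEdges ini fin W := by
  ext a
  simp [nonCutEdges, not_iff_not]

lemma nonCutEdges_eq_setOf_or (W : Set Vt) :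
    nonCutEdges ini fin W = {a | (ini a ∈ W ∧ fin a ∈ W) ∨ (ini a ∈ Wᶜ ∧ fin a ∈ Wᶜ)} := by
  ext a
  simp only [nonCutEdges, mem_ofPred_eq, mem_compl_iff]
  tauto

lemma setOf_ne_and_ne_eq_nonCutEdges (hloop : ∀ a, ini a ≠ fin a) (v₀ : Vt) :
    {a | ini a ≠ v₀ ∧ fin a ≠ v₀} = nonCutEdges ini fin {v₀}ᶜ := by
  ext a
  have hloop_a : ini a = v₀ → fin a = v₀ → False := fun hi hf => hloop a (hi.trans hf.symm)
  simp only [nonCutEdges, mem_ofPred_eq, mem_compl_iff, mem_singleton_iff]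
  tauto

lemma mem_nonCutEdges_of_sym2_eq {W : Set Vt} {a : E} {u v : Vt}
    (hs : s(ini a, fin a) = s(u, v)) : a ∈ nonCutEdges ini fin W ↔ (u ∈ W ↔ v ∈ W) := by
  rcases Sym2.eq_iff.mp hs with ⟨rfl, rfl⟩ | ⟨rfl, rfl⟩
  · rfl
  · exact Iff.comm

lemma exists_mem_not_mem_nonCutEdges_of_reachable {A : Set E} {W : Set Vt} {u v : Vt}
    (h : (graphSub ini fin A).Reachable u v) (hu : u ∈ W) (hv : v ∉ W) :
    ∃ a ∈ A, a ∉ nonCutEdges ini fin W := by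
  obtain ⟨p⟩ := h
  obtain ⟨d, -, hx, hy⟩ := p.exists_boundary_dart W hu hv
  obtain ⟨-, a, ha, hs⟩ := d.adj
  exact ⟨a, ha, fun h => hy ((mem_nonCutEdges_of_sym2_eq hs).mp h |>.mp hx)⟩

lemma mem_iff_mem_of_reachable {A : Set E} {W : Set Vt} (hA : A ⊆ nonCutEdges ini fin W)
    {u v : Vt} (h : (graphSub ini fin A).Reachable u v) : u ∈ W ↔ v ∈ W := by
  have key : ∀ {x y}, (graphSub ini fin A).Reachable x y → x ∈ W → y ∈ W := by
    intro x y hxy hx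
    by_contra hy
    obtain ⟨a, ha, hna⟩ := exists_mem_not_mem_nonCutEdges_of_reachable hxy hx hy
    exact hna (hA ha)
  exact ⟨key h, key h.symm⟩

lemma isGraphicFlat_nonCutEdges (W : Set Vt) : IsGraphicFlat ini fin (nonCutEdges ini fin W) :=
  fun _ hb => mem_iff_mem_of_reachable subset_rfl hb

lemma nonCutEdges_ne_univ (hconn : (graphOf ini fin).Connected) {W : Set Vt}
    (hW : W.Nonempty) (hWc : Wᶜ.Nonempty) : nonCutEdges ini fin W ≠ univ := by
  obtain ⟨u, hu⟩ := hW
  obtain ⟨v, hv⟩ := hWc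
  obtain ⟨a, -, ha⟩ := exists_mem_not_mem_nonCutEdges_of_reachable (hconn.preconnected u v) hu hv
  exact fun h => ha (h ▸ mem_univ a)

lemma reachable_graphSub_of_mem {A : Set E} {a : E} (ha : a ∈ A) :
    (graphSub ini fin A).Reachable (ini a) (fin a) := by
  by_cases h : ini a = fin a
  · rw [h]
  · exact Adj.reachable (G := graphSub ini fin A) ⟨h, a, ha, rfl⟩

lemma subset_nonCutEdges_preimage {A : Set E} (S : Set (graphSub ini fin A).ConnectedComponent) :
    A ⊆ nonCutEdges ini fin ((graphSub ini fin A).connectedComponentMk ⁻¹' S) := by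
  intro a ha
  have hsame := ConnectedComponent.sound (reachable_graphSub_of_mem (ini := ini) (fin := fin) ha)
  simp only [nonCutEdges, mem_ofPred_eq, mem_preimage, hsame]

lemma induce_graphSub_nonCutEdges (W : Set Vt) :
    (graphSub ini fin (nonCutEdges ini fin W)).induce W = (graphOf ini fin).induce W := by
  refine le_antisymm (comap_monotone _ (graphSub_mono (subset_univ _))) ?_
  rintro ⟨u, hu⟩ ⟨v, hv⟩ ⟨hne, a, -, hs⟩
  exact ⟨hne, a, (mem_nonCutEdges_of_sym2_eq hs).mpr (iff_of_true hu hv), hs⟩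

lemma reachable_of_induce_connected {W : Set Vt} (h : ((graphOf ini fin).induce W).Connected)
    {u v : Vt} (hu : u ∈ W) (hv : v ∈ W) :
    (graphSub ini fin (nonCutEdges ini fin W)).Reachable u v := by
  rw [← induce_graphSub_nonCutEdges] at h
  exact (h.preconnected ⟨u, hu⟩ ⟨v, hv⟩).map (Embedding.induce W).toHom

section Span

variable [DecidableEq Vt]

lemma edgeVec_injective (hloop : ∀ a, ini a ≠ fin a)
    (hsimple : Function.Injective fun a => s(ini a, fin a)) :
    Function.Injective (edgeVec ini fin) := by
  intro a b h
  have hfin := congrFun h (fin a)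
  have hini := congrFun h (ini a)
  simp only [edgeVec, Pi.sub_apply, Pi.single_apply, if_neg (hloop a),
    if_neg (hloop a).symm] at hfin hini
  have h₁ : fin a = fin b := by
    by_contra hne
    rw [if_neg hne] at hfin
    split_ifs at hfin <;> norm_num at hfin
  have h₂ : ini a = ini b := by
    by_contra hne
    rw [if_neg hne] at hini
    split_ifs at hini <;> norm_num at hini
  exact hsimple (by simp only [h₁, h₂])

lemma single_sub_single_mem_span_of_reachable {A : Set E} {u v : Vt}
    (h : (graphSub ini fin A).Reachable u v) :
    (Pi.single v 1 - Pi.single u 1 : Vt → ℝ) ∈ Submodule.span ℝ (edgeVec ini fin '' A) := by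
  obtain ⟨p⟩ := h
  induction p with
  | nil => simp
  | @cons u w v hadj _ ih =>
    obtain ⟨-, a, ha, hs⟩ := hadj
    have hstep : (Pi.single w 1 - Pi.single u 1 : Vt → ℝ) ∈
        Submodule.span ℝ (edgeVec ini fin '' A) := by
      have hspan := Submodule.subset_span (R := ℝ) (mem_image_of_mem (edgeVec ini fin) ha)
      rcases Sym2.eq_iff.mp hs with ⟨rfl, rfl⟩ | ⟨rfl, rfl⟩
      · exact hspan
      · simpa [edgeVec] using Submodule.neg_mem _ hspan
    simpa only [sub_add_sub_cancel'] using Submodule.add_mem _ hstep ih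

lemma mem_nonCutEdges_of_edgeVec_mem_span [Fintype Vt] {A : Set E} {W : Set Vt}
    (hA : A ⊆ nonCutEdges ini fin W) {b : E}
    (hb : edgeVec ini fin b ∈ Submodule.span ℝ (edgeVec ini fin '' A)) :
    b ∈ nonCutEdges ini fin W := by
  classical
  let φ : (Vt → ℝ) →ₗ[ℝ] ℝ := ∑ v ∈ W.toFinset, LinearMap.proj v
  have hφ : ∀ a, a ∈ nonCutEdges ini fin W ↔ φ (edgeVec ini fin a) = 0 := by
    intro a
    simp only [nonCutEdges, mem_ofPred_eq, edgeVec, LinearMap.coe_sum, LinearMap.coe_proj,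
      Finset.sum_apply, Function.eval, Pi.sub_apply, Pi.single_apply, Finset.sum_sub_distrib,
      Finset.sum_ite_eq', mem_toFinset, φ]
    split_ifs <;> norm_num <;> tauto
  have hker : Submodule.span ℝ (edgeVec ini fin '' A) ≤ LinearMap.ker φ := by
    rw [Submodule.span_le]
    rintro _ ⟨a, ha, rfl⟩
    exact (hφ a).mp (hA ha)
  exact (hφ b).mpr (hker hb)


lemma reachable_of_edgeVec_mem_span [Fintype Vt] {A : Set E} {b : E}
    (hb : edgeVec ini fin b ∈ Submodule.span ℝ (edgeVec ini fin '' A)) :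
    (graphSub ini fin A).Reachable (ini b) (fin b) := by
  set C := (graphSub ini fin A).connectedComponentMk (ini b)
  have hb' := mem_nonCutEdges_of_edgeVec_mem_span (subset_nonCutEdges_preimage {C}) hb
  exact ConnectedComponent.exact (hb'.mp rfl).symm

theorem isAComplete_iff_isGraphicFlat [Fintype Vt]
    (hinj : Function.Injective (edgeVec ini fin)) (A : Set E) :
    IsAComplete ini fin A ↔ IsGraphicFlat ini fin A := by
  constructor
  · intro h b hb
    have hmem : edgeVec ini fin b ∈ edgeVec ini fin '' A :=
      h ▸ ⟨single_sub_single_mem_span_of_reachable hb, b, rfl⟩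
    exact hinj.mem_set_image.mp hmem
  · intro h
    refine subset_antisymm ?_ fun x hx => ⟨Submodule.subset_span hx, image_subset_range _ _ hx⟩
    rintro _ ⟨hx, b, rfl⟩
    exact mem_image_of_mem _ (h b (reachable_of_edgeVec_mem_span hx))

end Span

theorem eq_nonCutEdges_of_maximal (hconn : (graphOf ini fin).Connected) {A : Set E}
    (hflat : IsGraphicFlat ini fin A) (hA : A ≠ univ)
    (hmax : ∀ A', IsGraphicFlat ini fin A' → A ⊆ A' → A' ≠ univ → A' = A) :
    ∃ W : Set Vt, ((graphOf ini fin).induce W).Connected ∧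
      ((graphOf ini fin).induce Wᶜ).Connected ∧ A = nonCutEdges ini fin W := by
  obtain ⟨b, hb⟩ := (ne_univ_iff_exists_notMem A).mp hA
  set G := graphSub ini fin A
  set C₁ := G.connectedComponentMk (ini b)
  set C₂ := G.connectedComponentMk (fin b)
  have hC : C₁ ≠ C₂ := fun h => hb (hflat b (ConnectedComponent.exact h))
  have hcover : G.connectedComponentMk ⁻¹' {C₁, C₂} = univ := by
    by_contra hW
    have hcut := nonCutEdges_ne_univ hconn ⟨ini b, Or.inl rfl⟩
      (nonempty_compl.mpr hW)
    refine hb (hmax _ (isGraphicFlat_nonCutEdges _) (subset_nonCutEdges_preimage _) hcut ▸ ?_)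
    exact iff_of_true (Or.inl rfl) (Or.inr rfl)
  have hsupp : C₁.suppᶜ = C₂.supp := by
    ext v
    have hv : G.connectedComponentMk v = C₁ ∨ G.connectedComponentMk v = C₂ :=
      (hcover.symm ▸ mem_univ v : v ∈ G.connectedComponentMk ⁻¹' {C₁, C₂})
    rcases hv with h | h <;> simp [ConnectedComponent.mem_supp_iff, h, hC, hC.symm]
  have hAeq : A = nonCutEdges ini fin C₁.supp := by
    refine (hmax _ (isGraphicFlat_nonCutEdges _) (subset_nonCutEdges_preimage {C₁}) ?_).symm
    exact (ne_of_mem_of_not_mem' (mem_univ b) fun h => hC (h.mp rfl).symm).symm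
  have hconn_supp : ∀ C : G.ConnectedComponent, ((graphOf ini fin).induce C.supp).Connected :=
    fun C => C.connected_toSimpleGraph.mono
      (comap_monotone _ (graphSub_mono (subset_univ A)))
  exact ⟨C₁.supp, hconn_supp C₁, hsupp ▸ hconn_supp C₂, hAeq⟩

theorem eq_nonCutEdges_of_nonCutEdges_subset {W : Set Vt}
    (h₁ : ((graphOf ini fin).induce W).Connected) (h₂ : ((graphOf ini fin).induce Wᶜ).Connected)
    {A : Set E} (hflat : IsGraphicFlat ini fin A) (hsub : nonCutEdges ini fin W ⊆ A)
    (hA : A ≠ univ) : A = nonCutEdges ini fin W := by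
  refine subset_antisymm (fun c hc => ?_) hsub
  by_contra hcW
  have hside : ∀ u v, (u ∈ W ↔ v ∈ W) → (graphSub ini fin A).Reachable u v := by
    intro u v huv
    refine Reachable.mono (graphSub_mono hsub) ?_
    by_cases hu : u ∈ W
    · exact reachable_of_induce_connected h₁ hu (huv.mp hu)
    · rw [← nonCutEdges_compl]
      exact reachable_of_induce_connected h₂ hu (mt huv.mpr hu)
  have hall : ∀ v, (graphSub ini fin A).Reachable (ini c) v := by
    intro v
    by_cases hv : ini c ∈ W ↔ v ∈ W
    · exact hside _ _ hv
    · have hfin : fin c ∈ W ↔ v ∈ W := by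
        simp only [nonCutEdges, mem_ofPred_eq] at hcW
        tauto
      exact (reachable_graphSub_of_mem hc).trans (hside _ _ hfin)
  exact hA (eq_univ_of_forall fun b => hflat b ((hall (ini b)).symm.trans (hall (fin b))))

end GraphicFlats

theorem stmt_12_general {Vt E : Type*} [Fintype Vt] [DecidableEq Vt]
    (ini fin : E → Vt) (hloop : ∀ a, ini a ≠ fin a)
    (hsimple : Function.Injective fun a => s(ini a, fin a))
    (hconn : (graphOf ini fin).Connected)
    (A : Set E) (hA : A ≠ Set.univ) :
    (IsAComplete ini fin A ∧
        ∀ A' : Set E, IsAComplete ini fin A' → A ⊆ A' → A' ≠ Set.univ → A' = A) ↔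
      ((∃ v₀ : Vt, A = {a | ini a ≠ v₀ ∧ fin a ≠ v₀} ∧
          ((graphOf ini fin).induce ({v₀}ᶜ : Set Vt)).Connected) ∨
        (∃ V₁ V₂ : Set Vt, V₁.Nonempty ∧ V₂.Nonempty ∧ Disjoint V₁ V₂ ∧
          V₁ ∪ V₂ = Set.univ ∧
          ((graphOf ini fin).induce V₁).Connected ∧
          ((graphOf ini fin).induce V₂).Connected ∧
          A = {a | (ini a ∈ V₁ ∧ fin a ∈ V₁) ∨ (ini a ∈ V₂ ∧ fin a ∈ V₂)})) := by
  simp only [isAComplete_iff_isGraphicFlat (edgeVec_injective hloop hsimple)]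
  constructor
  · rintro ⟨hflat, hmax⟩
    obtain ⟨W, h₁, h₂, rfl⟩ := eq_nonCutEdges_of_maximal hconn hflat hA hmax
    exact Or.inr ⟨W, Wᶜ, Set.nonempty_coe_sort.mp h₁.nonempty,
      Set.nonempty_coe_sort.mp h₂.nonempty, disjoint_compl_right, Set.union_compl_self W, h₁, h₂,
      nonCutEdges_eq_setOf_or W⟩
  · rintro (⟨v₀, rfl, hc⟩ | ⟨V₁, V₂, -, -, hdisj, hcover, h₁, h₂, rfl⟩)
    · have hsingle : ((graphOf ini fin).induce ({v₀}ᶜᶜ : Set Vt)).Connected := by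
        rw [compl_compl, SimpleGraph.induce_singleton_eq_top]
        exact SimpleGraph.connected_top
      rw [setOf_ne_and_ne_eq_nonCutEdges hloop]
      exact ⟨isGraphicFlat_nonCutEdges _,
        fun A' => eq_nonCutEdges_of_nonCutEdges_subset hc hsingle⟩
    · obtain rfl : V₂ = V₁ᶜ := (IsCompl.of_eq hdisj.eq_bot hcover).compl_eq.symm
      rw [← nonCutEdges_eq_setOf_or]
      exact ⟨isGraphicFlat_nonCutEdges _, fun A' => eq_nonCutEdges_of_nonCutEdges_subset h₁ h₂⟩

/-- for a connected oriented graph `Γ`, a proper subgraph (with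
edge set `A ⊊ L`) is maximal among proper A-complete subgraphs iff either
(i) it is connected and obtained by deleting one vertex with all edges incident
to it, or (ii) it is obtained by deleting all edges between the two parts of a
partition of the vertices into two nonempty parts with connected induced
subgraphs (a simple disconnecting set), so that it has two connected
components. -/
theorem stmt_12 {Vt E : Type*} [Fintype Vt] [DecidableEq Vt] [Fintype E]
    (ini fin : E → Vt) (hloop : ∀ a, ini a ≠ fin a)
    (hsimple : Function.Injective fun a => s(ini a, fin a))
    (hconn : (graphOf ini fin).Connected)
    (A : Set E) (hA : A ≠ Set.univ) :
    (IsAComplete ini fin A ∧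
        ∀ A' : Set E, IsAComplete ini fin A' → A ⊆ A' → A' ≠ Set.univ → A' = A) ↔
      ((∃ v₀ : Vt, A = {a | ini a ≠ v₀ ∧ fin a ≠ v₀} ∧
          ((graphOf ini fin).induce ({v₀}ᶜ : Set Vt)).Connected) ∨
        (∃ V₁ V₂ : Set Vt, V₁.Nonempty ∧ V₂.Nonempty ∧ Disjoint V₁ V₂ ∧
          V₁ ∪ V₂ = Set.univ ∧
          ((graphOf ini fin).induce V₁).Connected ∧
          ((graphOf ini fin).induce V₂).Connected ∧
          A = {a | (ini a ∈ V₁ ∧ fin a ∈ V₁) ∨ (ini a ∈ V₂ ∧ fin a ∈ V₂)})) :=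
  stmt_12_general ini fin hloop hsimple hconn A hA
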